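/- arXiv:math/0611416 — 2 statements merged into one kernel-verified Lean document; each statement's English description precedes it below -/
import Mathlib

section
/- Let n ∈ ℕ range over even integers, let k = k(n) ∈ ℕ, and let ℓ = ℓ(n) ∈ ℕ be such that lim_{n→∞}(n − 2ℓ(n)) = ∞ and H⁰_{n,k}(ℓ) is nonempty. Let f_n be chosen uniformly at random from H⁰_{n,k}(ℓ). Then there exists a sequence ε_n → 0, independent of α, such that for every α > 0 and every n, Pr[R(f_n) ≥ α·√(n−2ℓ)] ≥ (1 − ε_n)(1 − 2α²). -/
open Filter

/-- The graph `C_{n,k}`: vertex set `ℤ_n × [k]`, with edges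
`(i,s) ∼ (i+1,t)` for all `i ∈ ℤ_n` and `s,t ∈ [k]` (addition modulo `n`). -/
def Cnk (n k : ℕ) : SimpleGraph (ZMod n × Fin k) :=
  SimpleGraph.fromRel fun a b => a.1 + 1 = b.1

/-- `f` is a graph homomorphism to `ℤ`: it changes by exactly `1` along edges. -/
def IsHomZ {V : Type} (G : SimpleGraph V) (f : V → ℤ) : Prop :=
  ∀ a b, G.Adj a b → |f a - f b| = 1

/-- `H_{n,k}`: homomorphisms from `C_{n,k}` to `ℤ` with `f(0,1) = 0`. -/
def Hnk (n k : ℕ) (hk : 0 < k) : Set (ZMod n × Fin k → ℤ) :=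
  {f | IsHomZ (Cnk n k) f ∧ f (0, ⟨0, hk⟩) = 0}

/-- The `i`-layer is constant in `f`. -/
def LayerConst {n k : ℕ} (f : ZMod n × Fin k → ℤ) (i : ZMod n) : Prop :=
  ∀ s t, f (i, s) = f (i, t)

/-- `NC(f)`: the set of non-constant layers of `f`. -/
def NCset {n k : ℕ} (f : ZMod n × Fin k → ℤ) : Set (ZMod n) :=
  {i | ¬ LayerConst f i}

/-- `H⁰_{n,k}`: homomorphisms in `H_{n,k}` mapping the whole `0`-layer to `0`. -/
def H0nk (n k : ℕ) (hk : 0 < k) : Set (ZMod n × Fin k → ℤ) :=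
  {f | f ∈ Hnk n k hk ∧ ∀ s, f (0, s) = 0}

/-- The range size `R(f)`: the number of distinct values taken by `f`. -/
noncomputable def rngZ {V : Type} (f : V → ℤ) : ℕ := (Set.range f).ncard

/-- `H⁰_{n,k}(ℓ)`: homomorphisms in `H⁰_{n,k}` with exactly `ℓ` non-constant
layers. -/
def H0nkL (n k : ℕ) (hk : 0 < k) (ℓ : ℕ) : Set (ZMod n × Fin k → ℤ) :=
  {f | f ∈ H0nk n k hk ∧ (NCset f).ncard = ℓ}

namespace S15

abbrev Cst (k : ℕ) (F : ℕ → Fin k → ℤ) (j : ℕ) : Prop := ∀ s t, F j s = F j t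

def Yset (n k ℓ e : ℕ) : Set (ℕ → Fin k → ℤ) :=
  {F | (∀ j, j < n → ∀ s t, |F (j+1) t - F j s| = 1) ∧
       (∀ s, F 0 s = 0) ∧ (∀ s, F n s = 2*e) ∧ (∀ j, n ≤ j → F j = F n) ∧
       ((Finset.range n).filter (fun j => ¬ Cst k F j)).card = ℓ}


section AA

variable {n k ℓ e : ℕ}

lemma cst_zero {F : ℕ → Fin k → ℤ} (hF : F ∈ Yset n k ℓ e) : Cst k F 0 := by
  intro s t; rw [hF.2.1 s, hF.2.1 t]

lemma cst_n {F : ℕ → Fin k → ℤ} (hF : F ∈ Yset n k ℓ e) : Cst k F n := by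
  intro s t; rw [hF.2.2.1 s, hF.2.2.1 t]

lemma cst_ge {F : ℕ → Fin k → ℤ} (hF : F ∈ Yset n k ℓ e) {j : ℕ} (hj : n ≤ j) :
    Cst k F j := by
  intro s t; rw [hF.2.2.2.1 j hj]; exact cst_n hF s t

lemma struct {F : ℕ → Fin k → ℤ} (hF : F ∈ Yset n k ℓ e) {j : ℕ}
    (hj1 : 1 ≤ j) (hjn : j < n) (hnc : ¬ Cst k F j) :
    (∀ s t, F (j-1) s = F (j+1) t) ∧ Cst k F (j-1) ∧ Cst k F (j+1) := by
  obtain ⟨s, t, hst⟩ : ∃ s t, F j s ≠ F j t := by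
    by_contra h; push_neg at h; exact hnc h
  have hom := hF.1
  have hj' : j - 1 + 1 = j := by omega
  have hgap2 : j - 1 < n := by omega
  have key : ∀ x : ℤ, |x - F j s| = 1 → |x - F j t| = 1 → 2 * x = F j s + F j t := by
    intro x h1 h2
    rcases (abs_eq (by norm_num : (0:ℤ) ≤ 1)).mp h1 with h1' | h1' <;>
      rcases (abs_eq (by norm_num : (0:ℤ) ≤ 1)).mp h2 with h2' | h2' <;> omega
  have hup : ∀ u : Fin k, 2 * F (j+1) u = F j s + F j t := fun u =>
    key _ (hom j hjn s u) (hom j hjn t u)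
  have hdown : ∀ u : Fin k, 2 * F (j-1) u = F j s + F j t := by
    intro u
    have h1 : |F j s - F (j-1) u| = 1 := by
      have := hom (j-1) hgap2 u s; rwa [hj'] at this
    have h2 : |F j t - F (j-1) u| = 1 := by
      have := hom (j-1) hgap2 u t; rwa [hj'] at this
    rw [abs_sub_comm] at h1 h2
    exact key _ h1 h2
  refine ⟨fun a b => ?_, fun a b => ?_, fun a b => ?_⟩
  · have := hdown a; have := hup b; omega
  · have := hdown a; have := hdown b; omega
  · have := hup a; have := hup b; omega

lemma nc_pos {F : ℕ → Fin k → ℤ} (hF : F ∈ Yset n k ℓ e) {j : ℕ} (hnc : ¬ Cst k F j) :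
    1 ≤ j := by
  rcases Nat.eq_zero_or_pos j with h | h
  · exact absurd (h ▸ cst_zero hF) hnc
  · exact h

lemma nc_lt {F : ℕ → Fin k → ℤ} (hF : F ∈ Yset n k ℓ e) {j : ℕ} (hnc : ¬ Cst k F j) :
    j < n := by
  by_contra h
  exact hnc (cst_ge hF (by omega))

lemma step_pm {F : ℕ → Fin k → ℤ} (hF : F ∈ Yset n k ℓ e) {j : ℕ} (hj : j < n) (z : Fin k) :
    F (j+1) z - F j z = 1 ∨ F (j+1) z - F j z = -1 :=
  (abs_eq (by norm_num : (0:ℤ) ≤ 1)).mp (hF.1 j hj z z)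

lemma nc_steps {F : ℕ → Fin k → ℤ} (hF : F ∈ Yset n k ℓ e) {i : ℕ} (hnc : ¬ Cst k F i)
    (z : Fin k) : (F i z - F (i-1) z) + (F (i+1) z - F i z) = 0 := by
  have h1 := nc_pos hF hnc
  have h2 := nc_lt hF hnc
  have := (struct hF h1 h2 hnc).1 z z
  omega

/-- gap counting: twice the number of free gaps of sign `σ` is `n - 2ℓ + 2σe`. -/
lemma gapcount {F : ℕ → Fin k → ℤ} (hF : F ∈ Yset n k ℓ e) (z : Fin k)
    (σ : ℤ) (hσ : σ = 1 ∨ σ = -1) :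
    2 * ((((Finset.range n).filter
        (fun j => Cst k F j ∧ Cst k F (j+1) ∧ F (j+1) z - F j z = σ)).card : ℤ))
      = (n : ℤ) - 2 * ℓ + 2 * σ * e := by
  classical
  have hσ' : -σ ≠ σ := by rcases hσ with rfl | rfl <;> norm_num
  have hsum : ∑ j ∈ Finset.range n, (F (j+1) z - F j z) = 2 * e := by
    rw [Finset.sum_range_sub (fun j => F j z), hF.2.2.1 z, hF.2.1 z]
    ring
  set A := (Finset.range n).filter (fun j => F (j+1) z - F j z = σ) with hA
  set A' := (Finset.range n).filter (fun j => ¬ F (j+1) z - F j z = σ) with hA'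
  have hcards : A.card + A'.card = n := by
    rw [hA, hA', Finset.card_filter_add_card_filter_not, Finset.card_range]
  have hsumA : ∑ j ∈ A, (F (j+1) z - F j z) = (A.card : ℤ) * σ := by
    rw [Finset.sum_congr rfl (fun j hj => (Finset.mem_filter.mp hj).2),
      Finset.sum_const, nsmul_eq_mul]
  have hsumA' : ∑ j ∈ A', (F (j+1) z - F j z) = (A'.card : ℤ) * (-σ) := by
    rw [Finset.sum_congr rfl (fun j hj => ?_), Finset.sum_const, nsmul_eq_mul]
    have hj' := Finset.mem_filter.mp hj
    have hpm := step_pm hF (Finset.mem_range.mp hj'.1) z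
    have hne := hj'.2
    rcases hσ with rfl | rfl <;> omega
  have hAA : (A.card : ℤ) * σ + (A'.card : ℤ) * (-σ) = 2 * e := by
    rw [← hsumA, ← hsumA', Finset.sum_filter_add_sum_filter_not]
    exact hsum
  set G := (Finset.range n).filter
      (fun j => Cst k F j ∧ Cst k F (j+1) ∧ F (j+1) z - F j z = σ) with hG
  set Fo := A.filter (fun j => ¬ (Cst k F j ∧ Cst k F (j+1))) with hFo
  have hsplit2 : G.card + Fo.card = A.card := by
    have h1 : A.filter (fun j => Cst k F j ∧ Cst k F (j+1)) = G := by
      rw [hA, Finset.filter_filter, hG]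
      exact Finset.filter_congr (fun x _ => by tauto)
    rw [← h1, hFo, Finset.card_filter_add_card_filter_not]
  set NCF := (Finset.range n).filter (fun j => ¬ Cst k F j) with hNCF
  have hforced : Fo.card = NCF.card := by
    apply Finset.card_bij' (fun j _ => if Cst k F j then j + 1 else j)
      (fun i _ => if F i z - F (i-1) z = σ then i - 1 else i)
    · intro j hj
      obtain ⟨hjA, hjnc⟩ := Finset.mem_filter.mp hj
      obtain ⟨hjr, hjs⟩ := Finset.mem_filter.mp hjA
      by_cases hc : Cst k F j
      · have hnc1 : ¬ Cst k F (j+1) := fun h => hjnc ⟨hc, h⟩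
        rw [if_pos hc]
        exact Finset.mem_filter.mpr ⟨Finset.mem_range.mpr (nc_lt hF hnc1), hnc1⟩
      · rw [if_neg hc]
        exact Finset.mem_filter.mpr ⟨hjr, hc⟩
    · intro i hi
      obtain ⟨hir, hinc⟩ := Finset.mem_filter.mp hi
      have hi1 := nc_pos hF hinc
      have hin := nc_lt hF hinc
      have hsum0 := nc_steps hF hinc z
      have hd1 := step_pm hF (show i - 1 < n by omega) z
      have hd2 := step_pm hF hin z
      rw [(show i - 1 + 1 = i by omega)] at hd1
      by_cases hc : F i z - F (i-1) z = σ
      · rw [if_pos hc]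
        refine Finset.mem_filter.mpr ⟨Finset.mem_filter.mpr ⟨Finset.mem_range.mpr (by omega),
          ?_⟩, ?_⟩
        · rw [(show i - 1 + 1 = i by omega)]; exact hc
        · intro hcc
          exact hinc (by rw [(show i - 1 + 1 = i by omega)] at hcc; exact hcc.2)
      · rw [if_neg hc]
        have hstep : F (i+1) z - F i z = σ := by
          rcases hσ with rfl | rfl <;> omega
        refine Finset.mem_filter.mpr ⟨Finset.mem_filter.mpr ⟨Finset.mem_range.mpr hin,
          hstep⟩, fun hcc => hinc hcc.1⟩
    · intro j hj
      obtain ⟨hjA, hjnc⟩ := Finset.mem_filter.mp hj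
      obtain ⟨hjr, hjs⟩ := Finset.mem_filter.mp hjA
      by_cases hc : Cst k F j
      · rw [if_pos hc, if_pos (by rw [(show j + 1 - 1 = j by omega)]; exact hjs)]
        omega
      · rw [if_neg hc]
        have hsum0 := nc_steps hF hc z
        have hcond : ¬ (F j z - F (j-1) z = σ) := by
          rcases hσ with rfl | rfl <;> omega
        rw [if_neg hcond]
    · intro i hi
      obtain ⟨hir, hinc⟩ := Finset.mem_filter.mp hi
      have hi1 := nc_pos hF hinc
      have hin := nc_lt hF hinc
      by_cases hc : F i z - F (i-1) z = σ
      · rw [if_pos hc, if_pos ((struct hF hi1 hin hinc).2.1)]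
        omega
      · rw [if_neg hc, if_neg hinc]
  have hNCFcard : NCF.card = ℓ := hF.2.2.2.2
  have h1 : (G.card : ℤ) + ℓ = A.card := by
    rw [← hNCFcard, ← hforced]
    exact_mod_cast congrArg (Nat.cast : ℕ → ℤ) hsplit2
  have h2 : (A.card : ℤ) + A'.card = n := by exact_mod_cast congrArg (Nat.cast : ℕ → ℤ) hcards
  rcases hσ with rfl | rfl <;>
    [simp only [mul_one] at hAA; simp only [mul_neg, mul_one, neg_neg] at hAA] <;> omega

lemma val_bound {F : ℕ → Fin k → ℤ} (hF : F ∈ Yset n k ℓ e) :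
    ∀ j s, |F j s| ≤ n := by
  have key : ∀ j, j ≤ n → ∀ s, |F j s| ≤ j := by
    intro j
    induction j with
    | zero => intro _ s; simp [hF.2.1 s]
    | succ i ih =>
      intro hi s
      have h1 := hF.1 i (by omega) s s
      have h2 := ih (by omega) s
      have := abs_sub_abs_le_abs_sub (F (i+1) s) (F i s)
      push_cast
      omega
  intro j s
  rcases le_or_gt j n with h | h
  · exact le_trans (key j h s) (by exact_mod_cast h)
  · rw [hF.2.2.2.1 j (by omega)]
    exact key n le_rfl s

lemma Yfin : (Yset n k ℓ e).Finite := by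
  classical
  set T := Fin (n+1) → Fin k → Set.Icc (-(n:ℤ)) (n:ℤ) with hT
  haveI : Finite (Set.Icc (-(n:ℤ)) (n:ℤ)) := (Set.finite_Icc _ _).to_subtype
  haveI : Finite T := by infer_instance
  set ρ : (ℕ → Fin k → ℤ) → T := fun F j s =>
    ⟨max (-(n:ℤ)) (min (n:ℤ) (F j.val s)),
      ⟨le_max_left _ _, max_le (by omega) (min_le_left _ _)⟩⟩ with hρ
  apply Set.Finite.of_finite_image (f := ρ) (Set.toFinite _)
  intro F1 h1 F2 h2 heq
  have hb1 := val_bound h1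
  have hb2 := val_bound h2
  have hval : ∀ j, j ≤ n → F1 j = F2 j := by
    intro j hj
    funext s
    have := congrFun (congrFun heq ⟨j, by omega⟩) s
    have h3 := hb1 j s
    have h4 := hb2 j s
    have := congrArg Subtype.val this
    simp only [hρ] at this
    rw [abs_le] at h3 h4
    rw [max_eq_right (by simp; omega), max_eq_right (by simp; omega),
      min_eq_right h3.2, min_eq_right h4.2] at this
    exact this
  funext j s
  rcases le_or_gt j n with h | h
  · rw [hval j h]
  · rw [h1.2.2.2.1 j (by omega), h2.2.2.2.1 j (by omega), hval n le_rfl]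

def flip (b : ℤ) (F : ℕ → Fin k → ℤ) (j : ℕ) : ℕ → Fin k → ℤ :=
  fun i s => if i ≤ j then F i s else F i s + b

lemma flip_cst (b : ℤ) (F : ℕ → Fin k → ℤ) (j i : ℕ) :
    Cst k (flip b F j) i ↔ Cst k F i := by
  constructor <;> intro h s t <;> have := h s t <;> by_cases h' : i ≤ j <;>
    simp only [flip, h', if_true, if_false, if_pos, if_neg, not_false_iff] at this ⊢ <;>
    omega

lemma flip_cst_filter (b : ℤ) (F : ℕ → Fin k → ℤ) (j : ℕ) :
    ((Finset.range n).filter (fun i => ¬ Cst k (flip b F j) i)) =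
    ((Finset.range n).filter (fun i => ¬ Cst k F i)) := by
  classical
  exact Finset.filter_congr (fun i _ => by rw [flip_cst])

/-- flipping a free descending gap -/
lemma flip_mem {F : ℕ → Fin k → ℤ} (hF : F ∈ Yset n k ℓ e) {j : ℕ} (hj : j < n)
    (hc1 : Cst k F j) (hc2 : Cst k F (j+1)) (z : Fin k) (hdn : F (j+1) z - F j z = -1) :
    flip 2 F j ∈ Yset n k ℓ (e+1) ∧ Cst k (flip 2 F j) j ∧ Cst k (flip 2 F j) (j+1) ∧
      (flip 2 F j) (j+1) z - (flip 2 F j) j z = 1 := by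
  have hom := hF.1
  refine ⟨⟨?_, ?_, ?_, ?_, ?_⟩, ?_, ?_, ?_⟩
  · intro i hi s t
    unfold flip
    rcases lt_trichotomy i j with h | h | h
    · rw [if_pos (by omega : i ≤ j), if_pos (by omega : i + 1 ≤ j)]
      exact hom i hi s t
    · subst h
      rw [if_pos le_rfl, if_neg (by omega)]
      have e1 : F i s = F i z := hc1 s z
      have e2 : F (i+1) t = F (i+1) z := hc2 t z
      rw [e1, e2]
      have : F (i+1) z + 2 - F i z = 1 := by omega
      rw [this]; norm_num
    · rw [if_neg (by omega), if_neg (by omega)]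
      have := hom i hi s t
      have : F (i+1) t + 2 - (F i s + 2) = F (i+1) t - F i s := by ring
      rw [this]
      exact hom i hi s t
  · intro s
    unfold flip
    rw [if_pos (by omega : 0 ≤ j)]
    exact hF.2.1 s
  · intro s
    unfold flip
    rw [if_neg (by omega : ¬ n ≤ j)]
    rw [hF.2.2.1 s]
    push_cast; ring
  · intro i hi
    unfold flip
    funext s
    rw [if_neg (by omega), if_neg (by omega), hF.2.2.2.1 i hi]
  · rw [flip_cst_filter]
    exact hF.2.2.2.2
  · intro s t
    unfold flip
    rw [if_pos le_rfl, if_pos le_rfl]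
    exact hc1 s t
  · intro s t
    unfold flip
    rw [if_neg (by omega), if_neg (by omega)]
    have := hc2 s t; omega
  · unfold flip
    rw [if_pos le_rfl, if_neg (by omega)]
    omega

/-- unflipping a free ascending gap -/
lemma unflip_mem {G : ℕ → Fin k → ℤ} (hG : G ∈ Yset n k ℓ (e+1)) {j : ℕ} (hj : j < n)
    (hc1 : Cst k G j) (hc2 : Cst k G (j+1)) (z : Fin k) (hup : G (j+1) z - G j z = 1) :
    flip (-2) G j ∈ Yset n k ℓ e ∧ Cst k (flip (-2) G j) j ∧ Cst k (flip (-2) G j) (j+1) ∧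
      (flip (-2) G j) (j+1) z - (flip (-2) G j) j z = -1 := by
  have hom := hG.1
  refine ⟨⟨?_, ?_, ?_, ?_, ?_⟩, ?_, ?_, ?_⟩
  · intro i hi s t
    unfold flip
    rcases lt_trichotomy i j with h | h | h
    · rw [if_pos (by omega : i ≤ j), if_pos (by omega : i + 1 ≤ j)]
      exact hom i hi s t
    · subst h
      rw [if_pos le_rfl, if_neg (by omega)]
      have e1 : G i s = G i z := hc1 s z
      have e2 : G (i+1) t = G (i+1) z := hc2 t z
      rw [e1, e2]
      have : G (i+1) z + -2 - G i z = -1 := by omega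
      rw [this]; norm_num
    · rw [if_neg (by omega), if_neg (by omega)]
      have : G (i+1) t + -2 - (G i s + -2) = G (i+1) t - G i s := by ring
      rw [this]
      exact hom i hi s t
  · intro s
    unfold flip
    rw [if_pos (by omega : 0 ≤ j)]
    exact hG.2.1 s
  · intro s
    unfold flip
    rw [if_neg (by omega : ¬ n ≤ j)]
    rw [hG.2.2.1 s]
    push_cast; ring
  · intro i hi
    unfold flip
    funext s
    rw [if_neg (by omega), if_neg (by omega), hG.2.2.2.1 i hi]
  · rw [flip_cst_filter]
    exact hG.2.2.2.2
  · intro s t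
    unfold flip
    rw [if_pos le_rfl, if_pos le_rfl]
    exact hc1 s t
  · intro s t
    unfold flip
    rw [if_neg (by omega), if_neg (by omega)]
    have := hc2 s t; omega
  · unfold flip
    rw [if_pos le_rfl, if_neg (by omega)]
    omega

lemma flip_unflip (F : ℕ → Fin k → ℤ) (j : ℕ) : flip (-2) (flip 2 F j) j = F := by
  funext i s
  unfold flip
  split <;> ring

lemma unflip_flip (F : ℕ → Fin k → ℤ) (j : ℕ) : flip 2 (flip (-2) F j) j = F := by
  funext i s
  unfold flip
  split <;> ring

/-- the key flip identity -/
lemma flipid (z : Fin k) :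
    ((n:ℤ) - 2*ℓ - 2*e) * (Yset n k ℓ e).ncard
      = ((n:ℤ) - 2*ℓ + 2*(e+1)) * (Yset n k ℓ (e+1)).ncard := by
  classical
  set DF : (ℕ → Fin k → ℤ) → Finset ℕ := fun F => (Finset.range n).filter
      (fun j => Cst k F j ∧ Cst k F (j+1) ∧ F (j+1) z - F j z = -1) with hDF
  set UF : (ℕ → Fin k → ℤ) → Finset ℕ := fun G => (Finset.range n).filter
      (fun j => Cst k G j ∧ Cst k G (j+1) ∧ G (j+1) z - G j z = 1) with hUF
  have hfin1 : (Yset n k ℓ e).Finite := Yfin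
  have hfin2 : (Yset n k ℓ (e+1)).Finite := Yfin
  set Se := hfin1.toFinset with hSe
  set Se' := hfin2.toFinset with hSe'
  set P1 : Finset ((ℕ → Fin k → ℤ) × ℕ) :=
    Se.biUnion (fun F => (DF F).image (fun j => (F, j))) with hP1
  set P2 : Finset ((ℕ → Fin k → ℤ) × ℕ) :=
    Se'.biUnion (fun G => (UF G).image (fun j => (G, j))) with hP2
  have hmem1 : ∀ (F : ℕ → Fin k → ℤ) (j : ℕ),
      (F, j) ∈ P1 ↔ F ∈ Yset n k ℓ e ∧ j ∈ DF F := by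
    intro F j
    constructor
    · intro h
      obtain ⟨F', hF', h2⟩ := Finset.mem_biUnion.mp h
      obtain ⟨j', hj', heq⟩ := Finset.mem_image.mp h2
      rw [Prod.mk.injEq] at heq
      obtain ⟨rfl, rfl⟩ := heq
      exact ⟨(Set.Finite.mem_toFinset _).mp hF', hj'⟩
    · rintro ⟨h1, h2⟩
      exact Finset.mem_biUnion.mpr ⟨F, (Set.Finite.mem_toFinset _).mpr h1,
        Finset.mem_image.mpr ⟨j, h2, rfl⟩⟩
  have hmem2 : ∀ (G : ℕ → Fin k → ℤ) (j : ℕ),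
      (G, j) ∈ P2 ↔ G ∈ Yset n k ℓ (e+1) ∧ j ∈ UF G := by
    intro G j
    constructor
    · intro h
      obtain ⟨G', hG', h2⟩ := Finset.mem_biUnion.mp h
      obtain ⟨j', hj', heq⟩ := Finset.mem_image.mp h2
      rw [Prod.mk.injEq] at heq
      obtain ⟨rfl, rfl⟩ := heq
      exact ⟨(Set.Finite.mem_toFinset _).mp hG', hj'⟩
    · rintro ⟨h1, h2⟩
      exact Finset.mem_biUnion.mpr ⟨G, (Set.Finite.mem_toFinset _).mpr h1,
        Finset.mem_image.mpr ⟨j, h2, rfl⟩⟩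
  have hdisj : ∀ (S : Finset (ℕ → Fin k → ℤ)) (W : (ℕ → Fin k → ℤ) → Finset ℕ),
      ∀ x ∈ S, ∀ y ∈ S, x ≠ y →
      Disjoint ((W x).image (fun j => (x, j))) ((W y).image (fun j => (y, j))) := by
    intro S W x _ y _ hxy
    rw [Finset.disjoint_left]
    intro p hp hq
    obtain ⟨j1, _, h1⟩ := Finset.mem_image.mp hp
    obtain ⟨j2, _, h2⟩ := Finset.mem_image.mp hq
    exact hxy ((congrArg Prod.fst h1).trans (congrArg Prod.fst h2).symm)
  have hinj : ∀ F : ℕ → Fin k → ℤ, Function.Injective (fun j : ℕ => (F, j)) :=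
    fun F a b h => congrArg Prod.snd h
  have hcard1 : (P1.card : ℤ) = ∑ F ∈ Se, ((DF F).card : ℤ) := by
    rw [hP1, Finset.card_biUnion (hdisj Se DF)]
    push_cast
    exact Finset.sum_congr rfl (fun F _ => by rw [Finset.card_image_of_injective _ (hinj F)])
  have hcard2 : (P2.card : ℤ) = ∑ G ∈ Se', ((UF G).card : ℤ) := by
    rw [hP2, Finset.card_biUnion (hdisj Se' UF)]
    push_cast
    exact Finset.sum_congr rfl (fun G _ => by rw [Finset.card_image_of_injective _ (hinj G)])
  have key1 : 2 * (P1.card : ℤ) = ((n:ℤ) - 2*ℓ - 2*e) * Se.card := by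
    rw [hcard1, Finset.mul_sum]
    rw [Finset.sum_congr rfl (fun F hF => gapcount ((Set.Finite.mem_toFinset _).mp hF) z (-1)
      (Or.inr rfl)), Finset.sum_const, nsmul_eq_mul]
    ring
  have key2 : 2 * (P2.card : ℤ) = ((n:ℤ) - 2*ℓ + 2*(e+1)) * Se'.card := by
    rw [hcard2, Finset.mul_sum]
    rw [Finset.sum_congr rfl (fun G hG => gapcount ((Set.Finite.mem_toFinset _).mp hG) z 1
      (Or.inl rfl)), Finset.sum_const, nsmul_eq_mul]
    push_cast
    ring
  have hbij : P1.card = P2.card := by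
    refine Finset.card_bij' (fun p _ => (flip 2 p.1 p.2, p.2))
      (fun q _ => (flip (-2) q.1 q.2, q.2)) ?_ ?_ ?_ ?_
    · rintro ⟨F, j⟩ hp
      obtain ⟨hFY, hjDF⟩ := (hmem1 F j).mp hp
      obtain ⟨hjr, hc1, hc2, hdn⟩ := Finset.mem_filter.mp hjDF
      have hjn := Finset.mem_range.mp hjr
      obtain ⟨hY', hc1', hc2', hup'⟩ := flip_mem hFY hjn hc1 hc2 z hdn
      exact (hmem2 _ _).mpr ⟨hY', Finset.mem_filter.mpr ⟨hjr, hc1', hc2', hup'⟩⟩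
    · rintro ⟨G, j⟩ hq
      obtain ⟨hGY, hjUF⟩ := (hmem2 G j).mp hq
      obtain ⟨hjr, hc1, hc2, hup⟩ := Finset.mem_filter.mp hjUF
      have hjn := Finset.mem_range.mp hjr
      obtain ⟨hY', hc1', hc2', hdn'⟩ := unflip_mem hGY hjn hc1 hc2 z hup
      exact (hmem1 _ _).mpr ⟨hY', Finset.mem_filter.mpr ⟨hjr, hc1', hc2', hdn'⟩⟩
    · rintro ⟨F, j⟩ _
      simp only [flip_unflip]
    · rintro ⟨G, j⟩ _
      simp only [unflip_flip]

  have h1 : (Yset n k ℓ e).ncard = Se.card := Set.ncard_eq_toFinset_card _ hfin1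
  have h2 : (Yset n k ℓ (e+1)).ncard = Se'.card := Set.ncard_eq_toFinset_card _ hfin2
  rw [h1, h2, ← key1, ← key2, hbij]

end AA

section BB

variable {n k ℓ : ℕ}

lemma mono (z : Fin k) (hm : 0 ≤ (n:ℤ) - 2*ℓ) (e : ℕ) :
    ((Yset n k ℓ (e+1)).ncard : ℤ) ≤ ((Yset n k ℓ e).ncard : ℤ) := by
  have h := flipid (n := n) (ℓ := ℓ) (e := e) z
  have hA : (0:ℤ) ≤ ((Yset n k ℓ e).ncard : ℤ) := Int.natCast_nonneg _
  have hB : (0:ℤ) ≤ ((Yset n k ℓ (e+1)).ncard : ℤ) := Int.natCast_nonneg _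
  nlinarith [h, hA, hB]

lemma mono0 (z : Fin k) (hm : 0 ≤ (n:ℤ) - 2*ℓ) (e : ℕ) :
    ((Yset n k ℓ e).ncard : ℤ) ≤ ((Yset n k ℓ 0).ncard : ℤ) := by
  induction e with
  | zero => exact le_refl _
  | succ i ih => exact le_trans (mono z hm i) ih

lemma telescope (z : Fin k) (hm : 0 ≤ (n:ℤ) - 2*ℓ) (b : ℕ) :
    ((n:ℤ) - 2*ℓ) * (((Yset n k ℓ 0).ncard : ℤ) - ((Yset n k ℓ b).ncard : ℤ))
      ≤ 2 * b^2 * ((Yset n k ℓ 0).ncard : ℤ) := by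
  induction b with
  | zero => simp
  | succ b ih =>
    have hid := flipid (n := n) (ℓ := ℓ) (e := b) z
    have hmono := mono z hm b
    have hmono0 := mono0 z hm b
    have hA0 : (0:ℤ) ≤ ((Yset n k ℓ 0).ncard : ℤ) := Int.natCast_nonneg _
    have step : ((n:ℤ) - 2*ℓ) * (((Yset n k ℓ b).ncard : ℤ) - ((Yset n k ℓ (b+1)).ncard : ℤ))
        ≤ (4*b+2) * ((Yset n k ℓ 0).ncard : ℤ) := by
      nlinarith [hid, hmono, hmono0, hA0]
    push_cast
    nlinarith [ih, step]

/-- existence of a constant layer with value exactly b -/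
lemma exT (z : Fin k) {b : ℕ} (hb : 1 ≤ b) {F : ℕ → Fin k → ℤ} (hF : F ∈ Yset n k ℓ b) :
    ∃ j, j ≤ n ∧ Cst k F j ∧ F j z = (b:ℤ) := by
  classical
  set P := (Finset.range (n+1)).filter (fun j => Cst k F j ∧ F j z < (b:ℤ)) with hP
  have h0P : 0 ∈ P := by
    refine Finset.mem_filter.mpr ⟨Finset.mem_range.mpr (by omega), cst_zero hF, ?_⟩
    rw [hF.2.1 z]
    exact_mod_cast hb
  have hPne : P.Nonempty := ⟨0, h0P⟩
  obtain ⟨hj0r, hj0c, hj0v⟩ := Finset.mem_filter.mp (P.max'_mem hPne)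
  set j0 := P.max' hPne with hj0
  have hj0n : j0 < n + 1 := Finset.mem_range.mp hj0r
  have hj0ltn : j0 < n := by
    rcases Nat.lt_or_ge j0 n with h | h
    · exact h
    · exfalso
      have hj0eq : j0 = n := by omega
      rw [hj0eq, hF.2.2.1 z] at hj0v
      omega
  by_cases hc : Cst k F (j0+1)
  · have hstep := hF.1 j0 hj0ltn z z
    rcases (abs_eq (by norm_num : (0:ℤ) ≤ 1)).mp hstep with h | h
    all_goals {
      by_cases hlt : F (j0+1) z < (b:ℤ)
      · exfalso
        have hmem : j0 + 1 ∈ P :=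
          Finset.mem_filter.mpr ⟨Finset.mem_range.mpr (by omega), hc, hlt⟩
        have := P.le_max' _ hmem
        omega
      · push_neg at hlt
        exact ⟨j0 + 1, by omega, hc, by omega⟩
    }
  · have h2 : j0 + 1 < n := nc_lt hF hc
    obtain ⟨heq, hc1, hc2⟩ := struct hF (by omega) h2 hc
    have hval : F (j0+1+1) z = F j0 z := by
      have := heq z z
      rw [Nat.add_sub_cancel] at this
      omega
    exfalso
    have hmem : j0 + 1 + 1 ∈ P := by
      refine Finset.mem_filter.mpr ⟨Finset.mem_range.mpr (by omega), hc2, ?_⟩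
      rw [hval]; exact hj0v
    have := P.le_max' _ hmem
    omega

def refl0 {k : ℕ} (b : ℤ) (τ : ℕ) (F : ℕ → Fin k → ℤ) : ℕ → Fin k → ℤ :=
  fun j s => if j < τ then F j s else 2*b - F j s

lemma refl0_cst {b : ℤ} {τ : ℕ} {F : ℕ → Fin k → ℤ} (i : ℕ) :
    Cst k (refl0 b τ F) i ↔ Cst k F i := by
  constructor <;> intro h s t <;> have := h s t <;> by_cases h' : i < τ <;>
    simp only [refl0, h', if_true, if_false] at this ⊢ <;> omega

/-- reflection: injects `Yset b` into elements of `Yset 0` with a large value -/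
lemma refl_card (z : Fin k) {b : ℕ} (hb : 1 ≤ b) :
    ((Yset n k ℓ b).ncard : ℤ) ≤
      ((Yset n k ℓ 0 ∩ {F | ∃ j, j ≤ n ∧ (b:ℤ) ≤ F j z}).ncard : ℤ) := by
  classical
  set tau : (ℕ → Fin k → ℤ) → ℕ := fun F => sInf {i | Cst k F i ∧ F i z = (b:ℤ)} with htaudef
  have htfacts : ∀ F, F ∈ Yset n k ℓ b →
      tau F ≤ n ∧ 1 ≤ tau F ∧ Cst k F (tau F) ∧ F (tau F) z = (b:ℤ) ∧
      ∀ i, i < tau F → ¬ (Cst k F i ∧ F i z = (b:ℤ)) := by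
    intro F hF
    obtain ⟨j, hjn, hjc, hjv⟩ := exT z hb hF
    have hne : {i | Cst k F i ∧ F i z = (b:ℤ)}.Nonempty := ⟨j, hjc, hjv⟩
    have hmem := Nat.sInf_mem hne
    have hle : tau F ≤ j := Nat.sInf_le ⟨hjc, hjv⟩
    have hmin : ∀ i, i < tau F → ¬ (Cst k F i ∧ F i z = (b:ℤ)) :=
      fun i hi hmem' => Nat.notMem_of_lt_sInf hi hmem'
    have h1 : 1 ≤ tau F := by
      rcases Nat.eq_zero_or_pos (tau F) with h | h
      · exfalso
        have h2 : F (tau F) z = (b:ℤ) := hmem.2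
        rw [h, hF.2.1 z] at h2
        omega
      · exact h
    exact ⟨le_trans hle hjn, h1, hmem.1, hmem.2, hmin⟩
  have hmaps : ∀ F, F ∈ Yset n k ℓ b →
      refl0 (b:ℤ) (tau F) F ∈ Yset n k ℓ 0 ∩ {F | ∃ j, j ≤ n ∧ (b:ℤ) ≤ F j z} := by
    intro F hF
    obtain ⟨htn, ht1, htc, htv, htmin⟩ := htfacts F hF
    have htall : ∀ s, F (tau F) s = (b:ℤ) := fun s => (htc s z).trans htv
    constructor
    · refine ⟨?_, ?_, ?_, ?_, ?_⟩
      · intro i hi s t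
        rcases lt_trichotomy (i+1) (tau F) with h | h | h
        · unfold refl0
          rw [if_pos (by omega), if_pos (by omega)]
          exact hF.1 i hi s t
        · unfold refl0
          rw [if_neg (by omega), if_pos (by omega)]
          have hv : F (i+1) t = (b:ℤ) := by rw [h]; exact htall t
          have : 2*(b:ℤ) - F (i+1) t = F (i+1) t := by omega
          rw [this]
          exact hF.1 i hi s t
        · unfold refl0
          rw [if_neg (by omega), if_neg (by omega)]
          have : 2*(b:ℤ) - F (i+1) t - (2*(b:ℤ) - F i s) = -(F (i+1) t - F i s) := by ring
          rw [this, abs_neg]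
          exact hF.1 i hi s t
      · intro s
        unfold refl0
        rw [if_pos (by omega)]
        exact hF.2.1 s
      · intro s
        unfold refl0
        rw [if_neg (by omega), hF.2.2.1 s]
        push_cast
        ring
      · intro i hi
        funext s
        unfold refl0
        rw [if_neg (by omega), if_neg (by omega), hF.2.2.2.1 i hi]
      · rw [Finset.filter_congr (fun i _ => by rw [not_iff_not.mpr (refl0_cst i)])]
        exact hF.2.2.2.2
    · refine ⟨tau F, htn, ?_⟩
      unfold refl0
      rw [if_neg (by omega), htall z]
      omega
  have hinj : Set.InjOn (fun F => refl0 (b:ℤ) (tau F) F) (Yset n k ℓ b) := by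
    have key : ∀ F1 F2, F1 ∈ Yset n k ℓ b → F2 ∈ Yset n k ℓ b →
        refl0 (b:ℤ) (tau F1) F1 = refl0 (b:ℤ) (tau F2) F2 → tau F1 < tau F2 → False := by
      intro F1 F2 h1 h2 he hlt
      obtain ⟨htn1, ht11, htc1, htv1, htmin1⟩ := htfacts F1 h1
      obtain ⟨htn2, ht12, htc2, htv2, htmin2⟩ := htfacts F2 h2
      have hv : ∀ s, F2 (tau F1) s = (b:ℤ) := by
        intro s
        have e := congrFun (congrFun he (tau F1)) s
        unfold refl0 at e
        rw [if_neg (by omega), if_pos hlt] at e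
        have hb1 : F1 (tau F1) s = (b:ℤ) := (htc1 s z).trans htv1
        omega
      exact htmin2 (tau F1) hlt ⟨fun s t => by rw [hv s, hv t], hv z⟩
    intro F1 h1 F2 h2 he
    simp only at he
    have htaueq : tau F1 = tau F2 := by
      rcases lt_trichotomy (tau F1) (tau F2) with h | h | h
      · exact absurd h (fun hh => key F1 F2 h1 h2 he hh)
      · exact h
      · exact absurd h (fun hh => key F2 F1 h2 h1 he.symm hh)
    funext j s
    have e := congrFun (congrFun he j) s
    unfold refl0 at e
    rcases lt_or_ge j (tau F1) with h | h
    · rwa [if_pos h, if_pos (htaueq ▸ h)] at e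
    · rw [if_neg (by omega), if_neg (by rw [← htaueq]; omega)] at e
      omega
  have hfin : (Yset n k ℓ 0 ∩ {F : ℕ → Fin k → ℤ | ∃ j, j ≤ n ∧ (b:ℤ) ≤ F j z}).Finite :=
    Set.Finite.inter_of_left Yfin _
  exact_mod_cast Set.ncard_le_ncard_of_injOn _ hmaps hinj hfin

/-- unroll: from cyclic functions to ℕ-indexed functions -/
def Psi (n k : ℕ) (f : ZMod n × Fin k → ℤ) : ℕ → Fin k → ℤ :=
  fun j s => if j < n then f ((j : ZMod n), s) else 0

/-- roll up: from ℕ-indexed functions to cyclic functions -/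
def Phi (n k : ℕ) (F : ℕ → Fin k → ℤ) : ZMod n × Fin k → ℤ :=
  fun p => F p.1.val p.2

lemma adj_succ (hn : 2 ≤ n) (j : ℕ) (hj : j + 1 < n) (s t : Fin k) :
    (Cnk n k).Adj ((j : ZMod n), s) (((j+1 : ℕ) : ZMod n), t) := by
  haveI : NeZero n := ⟨by omega⟩
  rw [Cnk, SimpleGraph.fromRel_adj]
  constructor
  · intro h
    have h1 := congrArg Prod.fst h
    have h2 := congrArg (ZMod.val) h1
    rw [ZMod.val_cast_of_lt (by omega), ZMod.val_cast_of_lt hj] at h2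
    omega
  · left
    push_cast
    ring

lemma adj_wrap (hn : 2 ≤ n) (s t : Fin k) :
    (Cnk n k).Adj (((n-1 : ℕ) : ZMod n), s) ((0 : ZMod n), t) := by
  haveI : NeZero n := ⟨by omega⟩
  rw [Cnk, SimpleGraph.fromRel_adj]
  constructor
  · intro h
    have h1 := congrArg Prod.fst h
    have h2 := congrArg (ZMod.val) h1
    rw [ZMod.val_cast_of_lt (by omega), ZMod.val_zero] at h2
    omega
  · left
    show ((n-1 : ℕ) : ZMod n) + 1 = 0
    have : ((n-1 : ℕ) : ZMod n) + 1 = ((n-1+1 : ℕ) : ZMod n) := by push_cast; ring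
    rw [this, (show n-1+1 = n by omega), ZMod.natCast_self]

/-- generic adjacency: any consecutive layers, all strands -/
lemma adj_any (hn : 2 ≤ n) (i : ZMod n) (s t : Fin k) :
    (Cnk n k).Adj (i, s) (i + 1, t) := by
  haveI : NeZero n := ⟨by omega⟩
  rcases Nat.lt_or_ge (i.val + 1) n with h | h
  · have h1 : ((i.val : ℕ) : ZMod n) = i := ZMod.natCast_rightInverse i
    have := adj_succ (k := k) hn i.val h s t
    rw [h1] at this
    have h2 : ((i.val + 1 : ℕ) : ZMod n) = i + 1 := by push_cast [h1]; ring
    rwa [h2] at this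
  · have hv : i.val < n := ZMod.val_lt i
    have hv' : i.val = n - 1 := by omega
    have h1 : ((i.val : ℕ) : ZMod n) = i := ZMod.natCast_rightInverse i
    have := adj_wrap (k := k) hn (n := n) s t
    rw [← hv', h1] at this
    have h2 : i + 1 = 0 := by
      rw [← h1, hv']
      have : ((n-1 : ℕ) : ZMod n) + 1 = ((n-1+1 : ℕ) : ZMod n) := by push_cast; ring
      rw [this, (show n-1+1 = n by omega), ZMod.natCast_self]
    rwa [h2]


/-- step along a fixed strand, in the unrolled picture, for `f` a homomorphism -/
lemma strand_step (hn : 2 ≤ n) {hk : 0 < k} {f : ZMod n × Fin k → ℤ}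
    (hf : IsHomZ (Cnk n k) f) (i : ZMod n) (s t : Fin k) :
    |f (i + 1, t) - f (i, s)| = 1 := by
  rw [abs_sub_comm]
  exact hf _ _ (adj_any hn i s t)

lemma nc_card_eq (hn : 2 ≤ n) (f : ZMod n × Fin k → ℤ) :
    ((Finset.range n).filter (fun j => ¬ Cst k (Psi n k f) j)).card = (NCset f).ncard := by
  haveI : NeZero n := ⟨by omega⟩
  have hkey : ZMod.val '' NCset f =
      ↑((Finset.range n).filter (fun j => ¬ Cst k (Psi n k f) j)) := by
    ext j
    constructor
    · rintro ⟨i, hi, rfl⟩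
      have hiv : i.val < n := ZMod.val_lt i
      refine Finset.mem_coe.mpr (Finset.mem_filter.mpr ⟨Finset.mem_range.mpr hiv, ?_⟩)
      intro hcc
      apply hi
      intro s t
      have := hcc s t
      unfold Psi at this
      rw [if_pos hiv, if_pos hiv, ZMod.natCast_rightInverse i] at this
      exact this
    · intro hj
      obtain ⟨hjr, hjc⟩ := Finset.mem_filter.mp (Finset.mem_coe.mp hj)
      have hjn := Finset.mem_range.mp hjr
      refine ⟨(j : ZMod n), ?_, ZMod.val_cast_of_lt hjn⟩
      intro hcc
      apply hjc
      intro s t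
      unfold Psi
      rw [if_pos hjn, if_pos hjn]
      exact hcc s t
  have h1 : (ZMod.val '' NCset f).ncard = (NCset f).ncard :=
    Set.ncard_image_of_injective _ (ZMod.val_injective n)
  rw [← Set.ncard_coe_finset, ← hkey, h1]


/-- unrolled membership -/
lemma Psi_mem (hn : 2 ≤ n) {hk : 0 < k} {f : ZMod n × Fin k → ℤ}
    (hf : f ∈ H0nkL n k hk ℓ) : Psi n k f ∈ Yset n k ℓ 0 := by
  haveI : NeZero n := ⟨by omega⟩
  obtain ⟨⟨⟨hhom, _⟩, h0⟩, hnc⟩ := hf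
  have hstep : ∀ j, j < n → ∀ s t, |Psi n k f (j+1) t - Psi n k f j s| = 1 := by
    intro j hj s t
    unfold Psi
    rw [if_pos hj]
    rcases Nat.lt_or_ge (j+1) n with h | h
    · rw [if_pos h]
      have := strand_step hn (hk := hk) hhom (j : ZMod n) s t
      have hcast : ((j : ZMod n) + 1) = ((j+1 : ℕ) : ZMod n) := by push_cast; ring
      rwa [hcast] at this
    · have hj1 : j = n - 1 := by omega
      rw [if_neg (by omega)]
      have := strand_step hn (hk := hk) hhom (j : ZMod n) s t
      have hcast : ((j : ZMod n) + 1) = 0 := by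
        rw [hj1]
        have : ((n-1 : ℕ) : ZMod n) + 1 = ((n-1+1 : ℕ) : ZMod n) := by push_cast; ring
        rw [this, (show n-1+1 = n by omega), ZMod.natCast_self]
      rw [hcast, h0 t] at this
      rwa [show (0 : ℤ) - f ((j:ZMod n), s) = -(f ((j:ZMod n),s) - 0) by ring, abs_neg]
        at this ⊢
  refine ⟨hstep, ?_, ?_, ?_, ?_⟩
  · intro s
    unfold Psi
    rw [if_pos (by omega)]
    exact_mod_cast h0 s
  · intro s
    unfold Psi
    rw [if_neg (by omega)]
    norm_num
  · intro j hj
    funext s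
    unfold Psi
    rw [if_neg (by omega), if_neg (by omega)]
  · -- count of nonconstant layers
    rw [nc_card_eq hn f]
    exact hnc

lemma Phi_Psi (hn : 2 ≤ n) (f : ZMod n × Fin k → ℤ) : Phi n k (Psi n k f) = f := by
  haveI : NeZero n := ⟨by omega⟩
  funext p
  obtain ⟨i, s⟩ := p
  unfold Phi Psi
  rw [if_pos (ZMod.val_lt i), ZMod.natCast_rightInverse i]

lemma Psi_Phi (hn : 2 ≤ n) {F : ℕ → Fin k → ℤ} (hF : F ∈ Yset n k ℓ 0) :
    Psi n k (Phi n k F) = F := by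
  haveI : NeZero n := ⟨by omega⟩
  funext j s
  unfold Phi Psi
  rcases Nat.lt_or_ge j n with h | h
  · rw [if_pos h]
    simp only [ZMod.val_cast_of_lt h]
  · rw [if_neg (by omega), hF.2.2.2.1 j h, hF.2.2.1 s]
    norm_num

lemma Phi_mem (hn : 2 ≤ n) (hk : 0 < k) {F : ℕ → Fin k → ℤ} (hF : F ∈ Yset n k ℓ 0) :
    Phi n k F ∈ H0nkL n k hk ℓ := by
  haveI : NeZero n := ⟨by omega⟩
  haveI : Fact (1 < n) := ⟨by omega⟩
  have key : ∀ (i : ZMod n) (s t : Fin k), |Phi n k F (i+1, t) - Phi n k F (i, s)| = 1 := by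
    intro i s t
    show |F (i+1).val t - F i.val s| = 1
    rcases Nat.lt_or_ge (i.val + 1) n with h | h
    · have hv : (i+1).val = i.val + 1 := by
        rw [ZMod.val_add_of_lt (by rw [ZMod.val_one]; exact h), ZMod.val_one]
      rw [hv]
      exact hF.1 i.val (by omega) s t
    · have hv : i.val = n - 1 := by have := ZMod.val_lt i; omega
      have hv2 : i + 1 = 0 := by
        rw [← ZMod.natCast_rightInverse i, hv]
        have h3 : ((n-1 : ℕ) : ZMod n) + 1 = ((n-1+1 : ℕ) : ZMod n) := by push_cast; ring
        rw [h3, (show n-1+1 = n by omega), ZMod.natCast_self]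
      rw [hv2, ZMod.val_zero, hv, hF.2.1 t]
      have h1 := hF.1 (n-1) (by omega) s t
      rw [(show n-1+1 = n by omega), hF.2.2.1 t] at h1
      have h2 : (2:ℤ) * ((0:ℕ):ℤ) = 0 := by norm_num
      rw [h2] at h1
      exact h1
  have hhom : IsHomZ (Cnk n k) (Phi n k F) := by
    intro a b hadj
    rw [Cnk, SimpleGraph.fromRel_adj] at hadj
    obtain ⟨hne, hrel⟩ := hadj
    obtain ⟨ia, sa⟩ := a
    obtain ⟨ib, sb⟩ := b
    rcases hrel with h | h
    · simp only at h
      rw [abs_sub_comm]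
      have := key ia sa sb
      rwa [h] at this
    · simp only at h
      have := key ib sb sa
      rwa [h] at this
  have h0 : ∀ s, Phi n k F (0, s) = 0 := by
    intro s
    show F (0 : ZMod n).val s = 0
    rw [ZMod.val_zero]
    exact hF.2.1 s
  refine ⟨⟨⟨hhom, h0 _⟩, h0⟩, ?_⟩
  rw [← nc_card_eq hn (Phi n k F), Psi_Phi hn hF]
  exact hF.2.2.2.2




lemma discIVT (u : ℕ → ℤ) (hs : ∀ j, |u (j+1) - u j| = 1) (J : ℕ) (c : ℤ)
    (h0 : u 0 ≤ c) (hJ : c ≤ u J) : ∃ j, j ≤ J ∧ u j = c := by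
  induction J with
  | zero => exact ⟨0, le_rfl, by omega⟩
  | succ J ih =>
    rcases le_or_gt c (u J) with h | h
    · obtain ⟨j, hj, hv⟩ := ih h
      exact ⟨j, by omega, hv⟩
    · have := (abs_eq (by norm_num : (0:ℤ) ≤ 1)).mp (hs J)
      exact ⟨J + 1, le_rfl, by omega⟩

lemma rng_ge (hn : 2 ≤ n) {hk : 0 < k} {f : ZMod n × Fin k → ℤ} (hf : f ∈ H0nkL n k hk ℓ)
    {b : ℕ} (hbig : ∃ v, (b:ℤ) ≤ f v) : b + 1 ≤ rngZ f := by
  haveI : NeZero n := ⟨by omega⟩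
  obtain ⟨⟨⟨hhom, _⟩, h0⟩, _⟩ := hf
  obtain ⟨⟨i, s⟩, hv⟩ := hbig
  set u : ℕ → ℤ := fun j => f ((j:ZMod n), s) with hu
  have hstep : ∀ j, |u (j+1) - u j| = 1 := by
    intro j
    have := strand_step hn (hk := hk) hhom (j : ZMod n) s s
    have hc : ((j : ZMod n) + 1) = ((j + 1 : ℕ) : ZMod n) := by push_cast; ring
    rwa [hc] at this
  have h0' : u 0 = 0 := by
    show f (((0:ℕ) : ZMod n), s) = 0
    rw [Nat.cast_zero]
    exact h0 s
  have hval : u i.val = f (i, s) := by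
    show f (((i.val:ℕ) : ZMod n), s) = f (i, s)
    rw [ZMod.natCast_rightInverse i]
  have hicc : Set.Icc (0:ℤ) (b:ℤ) ⊆ Set.range f := by
    intro c hc
    obtain ⟨hc1, hc2⟩ := hc
    obtain ⟨j, _, hjv⟩ := discIVT u hstep i.val c (by omega) (by rw [hval]; omega)
    exact ⟨((j : ZMod n), s), hjv⟩
  have hfin : (Set.range f).Finite := Set.finite_range f
  have hcard : (Set.Icc (0:ℤ) (b:ℤ)).ncard = b + 1 := by
    rw [← Finset.coe_Icc, Set.ncard_coe_finset, Int.card_Icc]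
    omega
  have := Set.ncard_le_ncard hicc hfin
  rw [hcard] at this
  exact this

lemma Himg (hn : 2 ≤ n) (hk : 0 < k) :
    Phi n k '' (Yset n k ℓ 0) = H0nkL n k hk ℓ := by
  ext f
  constructor
  · rintro ⟨F, hF, rfl⟩
    exact Phi_mem hn hk hF
  · intro hf
    exact ⟨Psi n k f, Psi_mem hn hf, Phi_Psi hn f⟩

lemma Phi_injOn (hn : 2 ≤ n) : Set.InjOn (Phi n k) (Yset n k ℓ 0) :=
  fun F1 h1 F2 h2 he => by rw [← Psi_Phi hn h1, ← Psi_Phi hn h2, he]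

lemma Hfin (hn : 2 ≤ n) (hk : 0 < k) : (H0nkL n k hk ℓ).Finite := by
  rw [← Himg (ℓ := ℓ) hn hk]
  exact Set.Finite.image _ Yfin

lemma Hcard (hn : 2 ≤ n) (hk : 0 < k) :
    (H0nkL n k hk ℓ).ncard = (Yset n k ℓ 0).ncard := by
  rw [← Himg (ℓ := ℓ) hn hk]
  exact Set.ncard_image_of_injOn (Phi_injOn hn)

/-- the image of the big-value set lands in the H-side big-value set -/
lemma Big_sub (hn : 2 ≤ n) (hk : 0 < k) (z : Fin k) (b : ℕ) (hb : 1 ≤ b) :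
    Phi n k '' (Yset n k ℓ 0 ∩ {F | ∃ j, j ≤ n ∧ (b:ℤ) ≤ F j z}) ⊆
      {f | f ∈ H0nkL n k hk ℓ ∧ ∃ v, (b:ℤ) ≤ f v} := by
  haveI : NeZero n := ⟨by omega⟩
  rintro f ⟨F, ⟨hFY, ⟨j, hjn, hjv⟩⟩, rfl⟩
  refine ⟨Phi_mem hn hk hFY, ?_⟩
  rcases Nat.lt_or_ge j n with h | h
  · refine ⟨((j : ZMod n), z), ?_⟩
    show (b:ℤ) ≤ F ((j : ZMod n)).val z
    rwa [ZMod.val_cast_of_lt h]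
  · have hjeq : j = n := by omega
    rw [hjeq, hFY.2.2.1 z] at hjv
    exfalso
    have h2 : (2:ℤ) * ((0:ℕ):ℤ) = 0 := by norm_num
    rw [h2] at hjv
    omega

end BB

end S15

open S15

theorem stmt15 (k ℓ : ℕ → ℕ) (hk : ∀ n, 0 < k n)
    (hℓ : Tendsto (fun n => n - 2 * ℓ n)
      (atTop ⊓ Filter.principal {n : ℕ | Even n}) atTop)
    (hne : ∀ n : ℕ, Even n → (H0nkL n (k n) (hk n) (ℓ n)).Nonempty) :
    ∃ ε : ℕ → ℝ, Tendsto ε atTop (nhds 0) ∧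
      ∀ α : ℝ, 0 < α → ∀ n : ℕ, Even n →
        (1 - ε n) * (1 - 2 * α ^ 2) ≤
          (({f ∈ H0nkL n (k n) (hk n) (ℓ n) |
              α * Real.sqrt ((n - 2 * ℓ n : ℕ) : ℝ) ≤ (rngZ f : ℝ)}).ncard : ℝ)
            / ((H0nkL n (k n) (hk n) (ℓ n)).ncard : ℝ) := by
  classical
  refine ⟨fun n => if n = 0 then 1 else 0, ?_, ?_⟩
  · have hev : (fun n : ℕ => if n = 0 then (1:ℝ) else 0) =ᶠ[atTop] (fun _ => (0:ℝ)) := by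
      filter_upwards [eventually_gt_atTop 0] with n hn
      rw [if_neg (by omega)]
    exact (tendsto_congr' hev).mpr tendsto_const_nhds
  · intro α hα n hev
    simp only
    by_cases hn0 : n = 0
    · rw [if_pos hn0]
      have h1 : ((1:ℝ) - 1) * (1 - 2*α^2) = 0 := by ring
      rw [h1]
      positivity
    · rw [if_neg hn0]
      have hn2 : 2 ≤ n := by
        obtain ⟨r, hr⟩ := hev
        omega
      haveI : NeZero n := ⟨hn0⟩
      set kk := k n with hkk
      set hkn := hk n
      set L := ℓ n with hL
      set H := H0nkL n kk hkn L with hH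
      have hfinH : H.Finite := Hfin hn2 hkn
      have hneH : H.Nonempty := hne n hev
      have hHpos : 0 < H.ncard := (Set.ncard_pos hfinH).mpr hneH
      have hTpos : (0:ℝ) < (H.ncard : ℝ) := by exact_mod_cast hHpos
      set m := n - 2 * L with hm
      set z : Fin kk := ⟨0, hkn⟩ with hz
      set cond := {f ∈ H | α * Real.sqrt ((m : ℕ) : ℝ) ≤ (rngZ f : ℝ)} with hcond
      have hcond_sub : cond ⊆ H := fun f hf => hf.1
      have hcond_fin : cond.Finite := hfinH.subset hcond_sub
      by_cases hm0 : m = 0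
      · have hset : cond = H := by
          apply Set.eq_of_subset_of_subset hcond_sub
          intro f hf
          refine ⟨hf, ?_⟩
          rw [hm0, Nat.cast_zero, Real.sqrt_zero, mul_zero]
          exact Nat.cast_nonneg _
        rw [hset, div_self (ne_of_gt hTpos)]
        nlinarith [sq_nonneg α]
      · have hm1 : 1 ≤ m := by omega
        have h2Ln : 2 * L < n := by omega
        have hmZ : (m : ℤ) = (n:ℤ) - 2 * L := by
          rw [hm]
          push_cast [Nat.cast_sub (show 2*L ≤ n by omega)]
          ring
        have hmR : ((m:ℕ) : ℝ) = (n:ℝ) - 2 * L := by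
          rw [hm]
          push_cast [Nat.cast_sub (show 2*L ≤ n by omega)]
          ring
        have hmRpos : (0:ℝ) < ((m:ℕ) : ℝ) := by exact_mod_cast hm1
        have hsqpos : 0 < α * Real.sqrt ((m:ℕ):ℝ) := mul_pos hα (Real.sqrt_pos.mpr hmRpos)
        set B := ⌈α * Real.sqrt ((m:ℕ):ℝ)⌉₊ with hB
        have hB1 : 1 ≤ B := Nat.one_le_iff_ne_zero.mpr (by
          intro h
          have := Nat.ceil_eq_zero.mp h
          linarith)
        set b := B - 1 with hb
        have hble : (b:ℝ) ≤ α * Real.sqrt ((m:ℕ):ℝ) := by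
          have h1 : (B : ℝ) < α * Real.sqrt ((m:ℕ):ℝ) + 1 :=
            Nat.ceil_lt_add_one (le_of_lt hsqpos)
          have h2 : (b : ℝ) = (B : ℝ) - 1 := by
            rw [hb]
            push_cast [Nat.cast_sub hB1]
            ring
          linarith
        have hBle : α * Real.sqrt ((m:ℕ):ℝ) ≤ B := Nat.le_ceil _
        have hbsq : (b:ℝ)^2 ≤ α^2 * ((m:ℕ):ℝ) := by
          have h1 : (b:ℝ)^2 ≤ (α * Real.sqrt ((m:ℕ):ℝ))^2 := by
            apply sq_le_sq' (by nlinarith [hsqpos, (Nat.cast_nonneg b : (0:ℝ) ≤ (b:ℕ))]) hble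
          rwa [mul_pow, Real.sq_sqrt (le_of_lt hmRpos)] at h1
        by_cases hb0 : b = 0
        · have hset : cond = H := by
            apply Set.eq_of_subset_of_subset hcond_sub
            intro f hf
            refine ⟨hf, ?_⟩
            have hB1' : B = 1 := by omega
            have h1 : α * Real.sqrt ((m:ℕ):ℝ) ≤ 1 := by
              rw [hB1'] at hBle
              exact_mod_cast hBle
            have h2 : 1 ≤ rngZ f := by
              have h3 : (0:ℤ) ∈ Set.range f := ⟨(0, z), hf.1.1.2⟩
              have : 0 < (Set.range f).ncard :=
                (Set.ncard_pos (Set.finite_range f)).mpr ⟨0, h3⟩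
              exact this
            calc α * Real.sqrt ((m:ℕ):ℝ) ≤ 1 := h1
              _ ≤ (rngZ f : ℝ) := by exact_mod_cast h2
          rw [hset, div_self (ne_of_gt hTpos)]
          nlinarith [sq_nonneg α]
        · have hb1 : 1 ≤ b := by omega
          have hmZnn : 0 ≤ (n:ℤ) - 2 * L := by omega
          have htel := telescope (n := n) (ℓ := L) z hmZnn b
          have hrefl := refl_card (n := n) (ℓ := L) z hb1
          set Big := {F : ℕ → Fin kk → ℤ | ∃ j, j ≤ n ∧ (b:ℤ) ≤ F j z} with hBig
          have hsub2 : Phi n kk '' (Yset n kk L 0 ∩ Big) ⊆ cond := by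
            intro f hf
            have hf2 := Big_sub hn2 hkn z b hb1 hf
            refine ⟨hf2.1, ?_⟩
            have hr := rng_ge hn2 (hk := hkn) hf2.1 hf2.2
            have : (B : ℝ) ≤ (rngZ f : ℝ) := by
              have : B ≤ rngZ f := by omega
              exact_mod_cast this
            linarith
          have hcard2 : (Phi n kk '' (Yset n kk L 0 ∩ Big)).ncard
              = (Yset n kk L 0 ∩ Big).ncard :=
            Set.ncard_image_of_injOn ((Phi_injOn hn2).mono Set.inter_subset_left)
          have hc1 : (Yset n kk L 0 ∩ Big).ncard ≤ cond.ncard := by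
            rw [← hcard2]
            exact Set.ncard_le_ncard hsub2 hcond_fin
          -- integer chain
          have hYb : ((Yset n kk L b).ncard : ℤ) ≤ (cond.ncard : ℤ) :=
            le_trans hrefl (by exact_mod_cast hc1)
          have hHT : ((H.ncard : ℤ)) = ((Yset n kk L 0).ncard : ℤ) := by
            exact_mod_cast Hcard hn2 hkn
          have hchain : ((n:ℤ) - 2*L) * ((H.ncard:ℤ) - (cond.ncard:ℤ))
              ≤ 2 * b^2 * ((H.ncard:ℤ)) := by
            rw [hHT]
            calc ((n:ℤ) - 2*L) * (((Yset n kk L 0).ncard:ℤ) - (cond.ncard:ℤ))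
                ≤ ((n:ℤ) - 2*L) * (((Yset n kk L 0).ncard:ℤ)
                    - ((Yset n kk L b).ncard:ℤ)) := by
                  apply mul_le_mul_of_nonneg_left (by omega) hmZnn
              _ ≤ 2 * b^2 * ((Yset n kk L 0).ncard:ℤ) := htel
          have hchainR : ((n:ℝ) - 2*L) * ((H.ncard:ℝ) - (cond.ncard:ℝ))
              ≤ 2 * (b:ℝ)^2 * (H.ncard:ℝ) := by
            have h9 : (((((n:ℤ) - 2*L) * ((H.ncard:ℤ) - (cond.ncard:ℤ))) : ℤ) : ℝ) ≤ (((2 * b^2 * ((H.ncard:ℤ))) : ℤ) : ℝ) := Int.cast_le.mpr hchain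
            push_cast at h9
            linarith [h9]
          have hmn : (0:ℝ) < (n:ℝ) - 2*L := by rw [← hmR]; exact hmRpos
          have hb2T : (b:ℝ)^2 * (H.ncard:ℝ) ≤ α^2 * ((n:ℝ) - 2*(L:ℝ)) * (H.ncard:ℝ) := by
            have h7 := mul_le_mul_of_nonneg_right hbsq hTpos.le
            rw [hmR] at h7
            linarith
          have h5 : ((n:ℝ) - 2*L) * ((1 - 2*α^2) * (H.ncard:ℝ))
              ≤ ((n:ℝ) - 2*L) * (cond.ncard:ℝ) := by nlinarith [hchainR, hb2T]
          have h6 := le_of_mul_le_mul_left h5 hmn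
          rw [le_div_iff₀ hTpos]
          calc (1 - 0) * (1 - 2*α^2) * (H.ncard:ℝ) = (1 - 2*α^2) * (H.ncard:ℝ) := by ring
            _ ≤ (cond.ncard : ℝ) := h6
end

section
/- For even m ∈ ℕ, let (S₀, S₁, …, S_m) be chosen uniformly at random from P(m), the set of random walk bridges of length m. Then there exists a sequence ε_m → 0, independent of α, such that for every α > 0 and every even m, Pr[|{S₀, S₁, …, S_m}| ≥ α·√m] ≥ (1 − ε_m)(1 − 2α²). -/
/-!
Write `m = 2n`, `a = α²` and `r = ⌈α√m⌉`. Reflecting a path from `0` to `2r` after its first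
visit to `r` is an injection into the bridges that visit `0, 1, …, r`, so the probability is at
least `C(2n, n+r) / C(2n, n) = ∏_{j<r} (1 - (2j+1)/(n+j+1))`.
Bounding this product below by `1 - ∑` directly only gives `1 - 2a - O(1/√n)`, which is useless
when `1 - 2a` is tiny. Splitting it at `s = ⌈α√n⌉` and bounding each half separately gives
`(1 - a - e)²` with `e = 3/√n`, and `(1 - a - e)² ≥ (1 - ε)(1 - 2a)` as soon as `2e ≤ ε(1 - ε)`,
e.g. for `ε = 12/√n ≤ 1/2`.
-/

open Filter Finset

/-- `P(m)`: paths of length `m` on `ℤ` starting and ending at `0`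
(random walk bridges of length `m`). -/
def pathSet (m : ℕ) : Set (Fin (m + 1) → ℤ) :=
  {S | S 0 = 0 ∧ S (Fin.last m) = 0 ∧ ∀ i : Fin m, |S i.succ - S i.castSucc| = 1}

def pathsTo (m : ℕ) (t : ℤ) : Set (Fin (m + 1) → ℤ) :=
  {S | S 0 = 0 ∧ S (Fin.last m) = t ∧ ∀ i : Fin m, |S i.succ - S i.castSucc| = 1}

section UpSteps

variable {m : ℕ}

def walkOfUpSteps (A : Finset (Fin m)) : Fin (m + 1) → ℤ :=
  Fin.partialSum fun i => if i ∈ A then 1 else -1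

lemma walkOfUpSteps_zero (A : Finset (Fin m)) : walkOfUpSteps A 0 = 0 :=
  Fin.partialSum_zero _

lemma walkOfUpSteps_succ_sub (A : Finset (Fin m)) (i : Fin m) :
    walkOfUpSteps A i.succ - walkOfUpSteps A i.castSucc = if i ∈ A then 1 else -1 := by
  rw [walkOfUpSteps, Fin.partialSum_succ, add_sub_cancel_left]

lemma walkOfUpSteps_last (A : Finset (Fin m)) :
    walkOfUpSteps A (Fin.last m) = 2 * #A - m := by
  rw [walkOfUpSteps, Fin.partialSum, Fin.val_last, List.take_of_length_le (by simp),
    List.sum_ofFn, sum_ite]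
  have hA : #A ≤ m := card_le_univ A |>.trans_eq (Fintype.card_fin m)
  simp only [filter_mem_eq_inter, univ_inter, filter_not, sum_const, card_univ_sdiff,
    Fintype.card_fin, nsmul_eq_mul]
  omega

lemma walkOfUpSteps_mem_pathsTo (A : Finset (Fin m)) :
    walkOfUpSteps A ∈ pathsTo m (2 * #A - m) := by
  refine ⟨walkOfUpSteps_zero A, walkOfUpSteps_last A, fun i => ?_⟩
  rw [walkOfUpSteps_succ_sub]
  split_ifs <;> rfl

lemma walkOfUpSteps_injective : Function.Injective (walkOfUpSteps (m := m)) := by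
  intro A B h
  ext i
  have := walkOfUpSteps_succ_sub A i
  rw [h, walkOfUpSteps_succ_sub] at this
  split_ifs at this <;> simp_all

lemma eq_walkOfUpSteps {S : Fin (m + 1) → ℤ} (h0 : S 0 = 0)
    (hstep : ∀ i : Fin m, |S i.succ - S i.castSucc| = 1) :
    S = walkOfUpSteps {i | S i.succ - S i.castSucc = 1} := by
  funext i
  induction i using Fin.induction with
  | zero => rw [h0, walkOfUpSteps_zero]
  | succ i ih =>
    have hi := walkOfUpSteps_succ_sub {i | S i.succ - S i.castSucc = 1} i
    rcases abs_eq zero_le_one |>.1 (hstep i) with h | h <;> simp [h] at hi <;> omega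

lemma pathsTo_eq_image (t : ℤ) :
    pathsTo m t = walkOfUpSteps '' {A | 2 * (#A : ℤ) - m = t} := by
  ext S
  constructor
  · rintro ⟨h0, hlast, hstep⟩
    refine ⟨_, ?_, (eq_walkOfUpSteps h0 hstep).symm⟩
    rw [Set.mem_ofPred_eq, ← walkOfUpSteps_last, ← eq_walkOfUpSteps h0 hstep, hlast]
  · rintro ⟨A, rfl, rfl⟩
    exact walkOfUpSteps_mem_pathsTo A

lemma pathsTo_finite (t : ℤ) : (pathsTo m t).Finite :=
  (Set.finite_range walkOfUpSteps).subset <| by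
    rw [pathsTo_eq_image]; exact Set.image_subset_range _ _

lemma ncard_pathsTo (k : ℕ) {t : ℤ} (hk : 2 * (k : ℤ) - m = t) :
    (pathsTo m t).ncard = m.choose k := by
  have hA :
      {A : Finset (Fin m) | 2 * (#A : ℤ) - m = t} = ↑(powersetCard k (univ : Finset (Fin m))) := by
    ext A
    simp only [Set.mem_ofPred_eq, mem_coe, mem_powersetCard, subset_univ, true_and, ← hk]
    omega
  rw [pathsTo_eq_image, Set.ncard_image_of_injective _ walkOfUpSteps_injective, hA,
    Set.ncard_coe_finset, card_powersetCard, card_univ, Fintype.card_fin]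

end UpSteps

section Reflection

variable {m : ℕ} {r : ℤ} {S : Fin (m + 1) → ℤ}

def hitTime (r : ℤ) (S : Fin (m + 1) → ℤ) : Fin (m + 1) :=
  if h : ∃ i, r ≤ S i then Fin.find (r ≤ S ·) h else 0

lemma lt_of_lt_hitTime {i : Fin (m + 1)} (hi : i < hitTime r S) : S i < r := by
  unfold hitTime at hi
  split_ifs at hi with h
  · exact not_le.1 (Fin.find_min h hi)
  · exact absurd hi (Fin.not_lt_zero i)

lemma hitTime_eq {i : Fin (m + 1)} (hi : r ≤ S i) (hlt : ∀ j < i, S j < r) :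
    hitTime r S = i := by
  rw [hitTime, dif_pos ⟨i, hi⟩, Fin.find_eq_iff]
  exact ⟨hi, fun j hj => not_le.2 (hlt j hj)⟩

lemma apply_hitTime (h0 : S 0 ≤ r) (hup : ∀ i : Fin m, S i.succ - S i.castSucc ≤ 1)
    (hreach : ∃ i, r ≤ S i) : S (hitTime r S) = r := by
  have hle : r ≤ S (hitTime r S) := by
    rw [hitTime, dif_pos hreach]; exact Fin.find_spec (p := (r ≤ S ·)) hreach
  rcases Fin.eq_zero_or_eq_succ (hitTime r S) with h | ⟨j, hj⟩
  · rw [h] at hle ⊢; omega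
  · have hbefore : S j.castSucc < r := lt_of_lt_hitTime (hj ▸ Fin.castSucc_lt_succ)
    have := hup j
    rw [hj] at hle ⊢
    omega

lemma le_ncard_range (k : ℕ) (h0 : S 0 = 0) (hup : ∀ i : Fin m, S i.succ - S i.castSucc ≤ 1)
    {i : Fin (m + 1)} (hi : (k : ℤ) ≤ S i) : k + 1 ≤ (Set.range S).ncard := by
  have hsub : Set.Icc (0 : ℤ) k ⊆ Set.range S := fun l hl =>
    ⟨_, apply_hitTime (h0.trans_le hl.1) hup ⟨i, hl.2.trans hi⟩⟩
  calc k + 1 = (Set.Icc (0 : ℤ) k).ncard := by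
        rw [← coe_Icc, Set.ncard_coe_finset, Int.card_Icc]; omega
    _ ≤ (Set.range S).ncard := Set.ncard_le_ncard hsub (Set.finite_range S)

def reflect (r : ℤ) (S : Fin (m + 1) → ℤ) : Fin (m + 1) → ℤ :=
  fun i => if i ≤ hitTime r S then S i else 2 * r - S i

lemma reflect_of_le_hitTime {i : Fin (m + 1)} (hi : i ≤ hitTime r S) : reflect r S i = S i :=
  if_pos hi

lemma reflect_of_hitTime_le (hτ : S (hitTime r S) = r) {i : Fin (m + 1)} (hi : hitTime r S ≤ i) :
    reflect r S i = 2 * r - S i := by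
  unfold reflect
  split_ifs with h
  · rw [le_antisymm h hi, hτ]; ring
  · rfl

lemma hitTime_reflect (hτ : S (hitTime r S) = r) : hitTime r (reflect r S) = hitTime r S :=
  hitTime_eq (by rw [reflect_of_le_hitTime le_rfl, hτ])
    fun j hj => by rw [reflect_of_le_hitTime hj.le]; exact lt_of_lt_hitTime hj

lemma reflect_reflect (hτ : S (hitTime r S) = r) : reflect r (reflect r S) = S := by
  funext i
  rcases le_total i (hitTime r S) with hi | hi
  · rw [reflect_of_le_hitTime (hitTime_reflect hτ ▸ hi), reflect_of_le_hitTime hi]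
  · have hτ' : reflect r S (hitTime r (reflect r S)) = r := by
      rw [hitTime_reflect hτ, reflect_of_le_hitTime le_rfl, hτ]
    rw [reflect_of_hitTime_le hτ' (hitTime_reflect hτ ▸ hi), reflect_of_hitTime_le hτ hi]
    ring

lemma apply_hitTime_of_mem_pathsTo (hr : 0 ≤ r) (hS : S ∈ pathsTo m (2 * r)) :
    S (hitTime r S) = r :=
  apply_hitTime (hS.1.trans_le hr) (fun i => (le_abs_self _).trans (hS.2.2 i).le)
    ⟨Fin.last m, by rw [hS.2.1]; omega⟩

lemma reflect_mem_pathSet (hr : 0 ≤ r) (hS : S ∈ pathsTo m (2 * r)) : reflect r S ∈ pathSet m := by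
  obtain ⟨h0, hlast, hstep⟩ := hS
  have hτ := apply_hitTime_of_mem_pathsTo hr ⟨h0, hlast, hstep⟩
  refine ⟨by rw [reflect_of_le_hitTime (Fin.zero_le _), h0], ?_, fun i => ?_⟩
  · rw [reflect_of_hitTime_le hτ (Fin.le_last _), hlast]; ring
  · by_cases hi : i.succ ≤ hitTime r S
    · rw [reflect_of_le_hitTime hi, reflect_of_le_hitTime (Fin.castSucc_lt_succ.le.trans hi)]
      exact hstep i
    · have hi' : hitTime r S ≤ i.castSucc := Fin.le_castSucc_iff.2 (not_le.1 hi)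
      rw [reflect_of_hitTime_le hτ (hi'.trans Fin.castSucc_lt_succ.le),
        reflect_of_hitTime_le hτ hi', ← abs_neg, ← hstep i]
      ring_nf

lemma ncard_pathsTo_le_ncard_range (k : ℕ) :
    (pathsTo m (2 * k)).ncard ≤ {S ∈ pathSet m | k + 1 ≤ (Set.range S).ncard}.ncard := by
  refine Set.ncard_le_ncard_of_injOn (reflect k) (fun S hS => ?_)
    (Set.LeftInvOn.injOn fun S hS =>
      reflect_reflect (apply_hitTime_of_mem_pathsTo k.cast_nonneg hS))
    ((pathsTo_finite 0).subset fun S hS => hS.1)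
  have hS' := reflect_mem_pathSet k.cast_nonneg hS
  refine ⟨hS', le_ncard_range k hS'.1 (fun i => (le_abs_self _).trans (hS'.2.2 i).le)
    (i := hitTime k S) ?_⟩
  rw [reflect_of_le_hitTime le_rfl, apply_hitTime_of_mem_pathsTo k.cast_nonneg hS]

end Reflection

lemma cast_choose_add_eq_mul_prod (m k r : ℕ) :
    (m.choose (k + r) : ℝ) = m.choose k * ∏ j ∈ range r, ((m : ℝ) - k - j) / (k + j + 1) := by
  induction r with
  | zero => simp
  | succ r ih =>
    rw [prod_range_succ, ← mul_assoc, ← ih, ← add_assoc]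
    rcases le_or_gt (k + r) m with h | h
    · have hrec := congrArg (Nat.cast (R := ℝ)) (Nat.choose_succ_right_eq m (k + r))
      push_cast [Nat.cast_sub h] at hrec
      rw [mul_div_assoc', eq_div_iff (by positivity)]
      linear_combination hrec
    · rw [Nat.choose_eq_zero_of_lt h, Nat.choose_eq_zero_of_lt (by omega)]
      simp

lemma one_sub_sum_le_prod_one_sub {ι R : Type*} [CommRing R] [LinearOrder R]
    [IsStrictOrderedRing R] (s : Finset ι) (f : ι → R) (h0 : ∀ i ∈ s, 0 ≤ f i)
    (h1 : ∀ i ∈ s, f i ≤ 1) :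
    1 - ∑ i ∈ s, f i ≤ ∏ i ∈ s, (1 - f i) := by
  classical
  induction s using Finset.induction_on with
  | empty => simp
  | insert a s ha ih =>
    rw [sum_insert ha, prod_insert ha]
    have hf0 := h0 a (mem_insert_self a s)
    have hf1 := h1 a (mem_insert_self a s)
    have hprod :=
      ih (fun i hi => h0 i (mem_insert_of_mem hi)) (fun i hi => h1 i (mem_insert_of_mem hi))
    have hsum : 0 ≤ ∑ i ∈ s, f i := sum_nonneg fun i hi => h0 i (mem_insert_of_mem hi)
    nlinarith [mul_le_mul_of_nonneg_left hprod (sub_nonneg.2 hf1)]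

lemma sum_Ico_two_mul_add_one {a b : ℕ} (hab : a ≤ b) :
    ∑ j ∈ Ico a b, (2 * j + 1 : ℝ) = b ^ 2 - a ^ 2 := by
  rw [← sum_Ico_sub (fun j : ℕ => (j : ℝ) ^ 2) hab]
  refine sum_congr rfl fun j _ => ?_
  push_cast
  ring

lemma sum_Ico_div_le {n a b : ℕ} (hn : 0 < n) (hab : a ≤ b) :
    ∑ j ∈ Ico a b, (2 * j + 1 : ℝ) / (n + j + 1) ≤ (b ^ 2 - a ^ 2) / n :=
  calc ∑ j ∈ Ico a b, (2 * j + 1 : ℝ) / (n + j + 1)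
      ≤ ∑ j ∈ Ico a b, (2 * j + 1 : ℝ) / n :=
        sum_le_sum fun j _ =>
          div_le_div_of_nonneg_left (by positivity) (by positivity) (by linarith)
    _ = (b ^ 2 - a ^ 2) / n := by rw [← sum_div, sum_Ico_two_mul_add_one hab]

lemma sq_one_sub_le_choose_div {n r s : ℕ} {b : ℝ} (hn : 0 < n) (hsr : s ≤ r) (hrn : r ≤ n)
    (hb : b ≤ 1) (hs : (s : ℝ) ^ 2 ≤ b * n) (hrs : (r : ℝ) ^ 2 - s ^ 2 ≤ b * n) :
    (1 - b) ^ 2 ≤ ((2 * n).choose (n + r) : ℝ) / (2 * n).choose n := by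
  set x : ℕ → ℝ := fun j => (2 * j + 1) / (n + j + 1)
  have hfactor : ∀ j : ℕ, (((2 * n : ℕ) : ℝ) - n - j) / (n + j + 1) = 1 - x j := fun j => by
    simp only [x]
    field_simp
    push_cast
    ring
  have hx : ∀ j ∈ Ico 0 r, 0 ≤ x j ∧ x j ≤ 1 := fun j hj => by
    have : (j : ℝ) ≤ n := by exact_mod_cast (mem_Ico.1 hj).2.le.trans hrn
    exact ⟨by positivity, (div_le_one (by positivity)).2 (by linarith)⟩
  have hhalf : ∀ a c, a ≤ c → c ≤ r → ((c : ℝ) ^ 2 - a ^ 2 ≤ b * n) →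
      1 - b ≤ ∏ j ∈ Ico a c, (1 - x j) := fun a c hac hcr hbound => by
    have hsub : Ico a c ⊆ Ico 0 r := Ico_subset_Ico (Nat.zero_le a) hcr
    refine le_trans ?_ (one_sub_sum_le_prod_one_sub _ x (fun j hj => (hx j (hsub hj)).1)
      fun j hj => (hx j (hsub hj)).2)
    have := (sum_Ico_div_le hn hac).trans ((div_le_iff₀ (by positivity)).2 hbound)
    linarith
  have hA := hhalf 0 s (Nat.zero_le s) hsr (by simpa using hs)
  have hB := hhalf s r hsr le_rfl hrs
  rw [cast_choose_add_eq_mul_prod,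
    mul_div_cancel_left₀ _ (Nat.cast_pos.2 (Nat.choose_pos (by omega))).ne']
  simp_rw [hfactor]
  rw [range_eq_Ico, ← prod_Ico_consecutive _ (Nat.zero_le s) hsr, sq]
  exact mul_le_mul hA hB (sub_nonneg.2 hb) ((sub_nonneg.2 hb).trans hA)

lemma ncard_pathSet_two_mul (n : ℕ) : (pathSet (2 * n)).ncard = (2 * n).choose n :=
  ncard_pathsTo n (by push_cast; ring)

lemma choose_div_le_ncard_div (n r : ℕ) {x : ℝ} (hx : x ≤ r + 1) :
    ((2 * n).choose (n + r) : ℝ) / (2 * n).choose n ≤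
      ({S ∈ pathSet (2 * n) | x ≤ ((Set.range S).ncard : ℝ)}.ncard : ℝ) /
        (pathSet (2 * n)).ncard := by
  rw [ncard_pathSet_two_mul]
  refine div_le_div_of_nonneg_right ?_ (Nat.cast_nonneg _)
  have hfin : {S ∈ pathSet (2 * n) | x ≤ ((Set.range S).ncard : ℝ)}.Finite :=
    (pathsTo_finite 0).subset fun S hS => hS.1
  have hsub : {S ∈ pathSet (2 * n) | r + 1 ≤ (Set.range S).ncard} ⊆
      {S ∈ pathSet (2 * n) | x ≤ ((Set.range S).ncard : ℝ)} := fun S ⟨hS, hr⟩ =>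
    ⟨hS, hx.trans (by exact_mod_cast hr)⟩
  rw [← ncard_pathsTo (t := 2 * r) (n + r) (by push_cast; ring)]
  exact_mod_cast (ncard_pathsTo_le_ncard_range r).trans (Set.ncard_le_ncard hsub hfin)

lemma one_sub_mul_one_sub_two_mul_le_sq {a e ε : ℝ} (ha : 0 ≤ a) (he : 0 ≤ e)
    (hε : 2 * e ≤ ε * (1 - ε)) : (1 - ε) * (1 - 2 * a) ≤ (1 - (a + e)) ^ 2 := by
  nlinarith [sq_nonneg (a - ε), mul_nonneg ha he]

lemma one_sub_mul_le_choose_div {n : ℕ} (hn : 576 ≤ n) {α : ℝ} (hα : 0 < α) :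
    (1 - 12 / √n) * (1 - 2 * α ^ 2) ≤
      ((2 * n).choose (n + ⌈α * √((2 * n : ℕ) : ℝ)⌉₊) : ℝ) / (2 * n).choose n := by
  set u := √(n : ℝ)
  have hu : 24 ≤ u := Real.le_sqrt_of_sq_le (by norm_num; exact_mod_cast hn)
  have hnu : (n : ℝ) = u ^ 2 := (Real.sq_sqrt n.cast_nonneg).symm
  have hε : 12 / u ≤ 1 / 2 := by rw [div_le_iff₀ (by positivity)]; linarith
  rcases le_or_gt 1 (2 * α ^ 2) with hα2 | hα2
  · exact (mul_nonpos_of_nonneg_of_nonpos (by linarith) (by linarith)).trans (by positivity)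
  set x := α * √((2 * n : ℕ) : ℝ)
  have hx2 : x ^ 2 = 2 * α ^ 2 * u ^ 2 := by
    rw [mul_pow, Real.sq_sqrt (Nat.cast_nonneg _), ← hnu]; push_cast; ring
  have hxu : x < u := lt_of_pow_lt_pow_left₀ 2 (by positivity) <| by
    rw [hx2]; exact mul_lt_of_lt_one_left (by positivity) hα2
  have hαux : α * u ≤ x :=
    mul_le_mul_of_nonneg_left (Real.sqrt_le_sqrt (by norm_cast; omega)) hα.le
  have hα1 : α < 1 := by nlinarith
  set r := ⌈x⌉₊
  set s := ⌈α * u⌉₊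
  have hr : (r : ℝ) < x + 1 := Nat.ceil_lt_add_one (by positivity)
  have hs : (s : ℝ) < α * u + 1 := Nat.ceil_lt_add_one (by positivity)
  have hs' : α * u ≤ s := Nat.le_ceil _
  have hrn : r ≤ n := by
    have : (r : ℝ) < n + 1 := by nlinarith
    exact_mod_cast Nat.lt_succ_iff.1 (by exact_mod_cast this)
  have h3u : 3 / u * n = 3 * u := by rw [hnu]; field_simp
  have herr : 2 * (3 / u) ≤ 12 / u * (1 - 12 / u) := by
    rw [show 2 * (3 / u) = 12 / u * (1 / 2) by ring]
    exact mul_le_mul_of_nonneg_left (by linarith) (by positivity)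
  refine (one_sub_mul_one_sub_two_mul_le_sq (sq_nonneg α) (by positivity) herr).trans
    (sq_one_sub_le_choose_div (b := α ^ 2 + 3 / u) (by omega) (Nat.ceil_mono hαux) hrn
      (by nlinarith) ?_ ?_)
  · rw [add_mul, h3u, hnu]; nlinarith
  · rw [add_mul, h3u, hnu]; nlinarith

noncomputable def rangeError (m : ℕ) : ℝ :=
  if m < 1152 then 1 else 12 / √(m / 2)

lemma tendsto_rangeError : Tendsto rangeError atTop (nhds 0) :=
  (tendsto_const_nhds.div_atTop (Real.tendsto_sqrt_atTop.comp
    (tendsto_natCast_atTop_atTop.atTop_div_const two_pos))).congr'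
    ((eventually_ge_atTop 1152).mono fun _ hm => (if_neg (not_lt.2 hm)).symm)

theorem stmt16 :
    ∃ ε : ℕ → ℝ, Tendsto ε atTop (nhds 0) ∧
      ∀ α : ℝ, 0 < α → ∀ m : ℕ, Even m →
        (1 - ε m) * (1 - 2 * α ^ 2) ≤
          (({S ∈ pathSet m | α * Real.sqrt m ≤ ((Set.range S).ncard : ℝ)}).ncard : ℝ)
            / ((pathSet m).ncard : ℝ) := by
  refine ⟨rangeError, tendsto_rangeError, fun α hα m hm => ?_⟩
  rcases lt_or_ge m 1152 with hsmall | hlarge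
  · rw [rangeError, if_pos hsmall, sub_self, zero_mul]
    positivity
  obtain ⟨n, rfl⟩ := even_iff_two_dvd.1 hm
  have hhalf : ((2 * n : ℕ) : ℝ) / 2 = n := by push_cast; ring
  rw [rangeError, if_neg (not_lt.2 hlarge), hhalf]
  exact (one_sub_mul_le_choose_div (by omega) hα).trans
    (choose_div_le_ncard_div n _ ((Nat.le_ceil _).trans (le_add_of_nonneg_right zero_le_one)))
end
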